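/- Let n and d be positive integers, let 0 < ε < 1 be a real number, and let G be an (n,d)-Ramanujan graph. If A and B are disjoint sets of vertices of G with |A| = ε·n and |B| > 4n/(d·ε), then there exists an edge of G connecting a vertex of A to a vertex of B. -/

import Mathlib

open Finset

/-- A simple graph `G` on a finite vertex set of cardinality `n` is `(n,d)`-Ramanujan
if it is `d`-regular and every real vector `x` on the vertices whose coordinates sum
to `0` satisfies `‖Ax‖₂ ≤ 2√(d−1)·‖x‖₂`, where `A` is the adjacency matrix of `G`. -/
def IsRamanujan {V : Type*} [Fintype V] [DecidableEq V] (n d : ℕ)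
    (G : SimpleGraph V) [DecidableRel G.Adj] : Prop :=
  Fintype.card V = n ∧ G.IsRegularOfDegree d ∧
    ∀ x : V → ℝ, (∑ v, x v) = 0 →
      Real.sqrt (∑ v, ((G.adjMatrix ℝ).mulVec x v) ^ 2) ≤
        2 * Real.sqrt ((d : ℝ) - 1) * Real.sqrt (∑ v, (x v) ^ 2)

open Matrix

/-!
If no edge joins `A` to `B`, test the spectral bound on `x = n·1_B − |B|·1`, which has zero sum.
On every vertex of `A` the vector `Ax` equals `−d|B|`, so `‖Ax‖² ≥ |A| d² |B|²`, while
`‖x‖² = n|B|(n − |B|)`. The Ramanujan bound `‖Ax‖² ≤ 4(d − 1)‖x‖²` then forces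
`|A| |B| d² < 4 d n²`, that is `ε d |B| < 4n`, contradicting the size of `B`.
-/

section

variable {V : Type*} [Fintype V] [DecidableEq V]

noncomputable def centeredIndicator (B : Finset V) (v : V) : ℝ :=
  Fintype.card V * (if v ∈ B then 1 else 0) - #B

theorem sum_centeredIndicator (B : Finset V) : ∑ v, centeredIndicator B v = 0 := by
  simp only [centeredIndicator, mul_ite, mul_one, mul_zero, sum_sub_distrib, sum_ite_mem,
    univ_inter, sum_const, nsmul_eq_mul, card_univ]
  ring

theorem sum_sq_centeredIndicator (B : Finset V) :
    ∑ v, centeredIndicator B v ^ 2 = Fintype.card V * #B * (Fintype.card V - #B) := by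
  have hsq : ∀ v, centeredIndicator B v ^ 2 =
      ((Fintype.card V : ℝ) ^ 2 - 2 * Fintype.card V * #B) * (if v ∈ B then 1 else 0)
        + (#B : ℝ) ^ 2 := by
    intro v
    by_cases hv : v ∈ B <;> simp [centeredIndicator, hv]; ring
  simp only [hsq, sum_add_distrib, ← mul_sum, sum_boole, sum_const, card_univ, nsmul_eq_mul,
    filter_mem_eq_of_subset (subset_univ B)]
  ring

namespace SimpleGraph

variable {G : SimpleGraph V} [DecidableRel G.Adj] {d : ℕ}

theorem adjMatrix_mulVec_centeredIndicator_of_forall_not_adj (hG : G.IsRegularOfDegree d)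
    {B : Finset V} {v : V} (hv : ∀ u ∈ B, ¬ G.Adj v u) :
    (G.adjMatrix ℝ *ᵥ centeredIndicator B) v = -(d * #B) := by
  have hdisj : G.neighborFinset v ∩ B = ∅ := disjoint_iff_inter_eq_empty.1 <|
    Finset.disjoint_left.2 fun u hu huB => hv u huB ((mem_neighborFinset G v u).1 hu)
  simp [adjMatrix_mulVec_apply, centeredIndicator, sum_sub_distrib, hdisj, hG v]

/-- The Alon–Chung inequality. -/
theorem card_mul_card_mul_sq_le_of_forall_not_adj (hG : G.IsRegularOfDegree d) {μ : ℝ}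
    (hμ : ∀ x : V → ℝ, ∑ v, x v = 0 → ∑ v, (G.adjMatrix ℝ *ᵥ x) v ^ 2 ≤ μ * ∑ v, x v ^ 2)
    {A B : Finset V} (hB : B.Nonempty) (hAB : ∀ a ∈ A, ∀ b ∈ B, ¬ G.Adj a b) :
    #A * #B * d ^ 2 ≤ μ * Fintype.card V * (Fintype.card V - #B) := by
  have hlow : #A * (d * #B : ℝ) ^ 2 ≤ ∑ v, (G.adjMatrix ℝ *ᵥ centeredIndicator B) v ^ 2 :=
    calc #A * (d * #B : ℝ) ^ 2
        = ∑ v ∈ A, (G.adjMatrix ℝ *ᵥ centeredIndicator B) v ^ 2 := by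
          rw [sum_congr rfl fun v hv =>
            by rw [adjMatrix_mulVec_centeredIndicator_of_forall_not_adj hG (hAB v hv)]]
          simp
      _ ≤ _ := sum_le_sum_of_subset_of_nonneg (subset_univ A) fun _ _ _ => sq_nonneg _
  have hup := hμ _ (sum_centeredIndicator B)
  rw [sum_sq_centeredIndicator] at hup
  have hBpos : (0 : ℝ) < #B := by exact_mod_cast hB.card_pos
  refine le_of_mul_le_mul_right ?_ hBpos
  nlinarith

end SimpleGraph

theorem IsRamanujan.sum_sq_mulVec_le {n d : ℕ} {G : SimpleGraph V} [DecidableRel G.Adj]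
    (hG : IsRamanujan n d G) (hd : 0 < d) (x : V → ℝ) (hx : ∑ v, x v = 0) :
    ∑ v, (G.adjMatrix ℝ *ᵥ x) v ^ 2 ≤ 4 * (d - 1) * ∑ v, x v ^ 2 := by
  have hd' : (0 : ℝ) ≤ d - 1 := by
    rw [sub_nonneg]; exact_mod_cast hd
  rw [← Real.sqrt_le_sqrt_iff (by positivity), Real.sqrt_mul (by positivity),
    Real.sqrt_mul (by norm_num), show (4 : ℝ) = 2 ^ 2 by norm_num, Real.sqrt_sq zero_le_two]
  exact hG.2.2 x hx

end

theorem ramanujan_unbalanced_expansion_general {V : Type*} [Fintype V] [DecidableEq V]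
    (n d : ℕ) (hd : 0 < d) (ε : ℝ) (hε0 : 0 < ε)
    (G : SimpleGraph V) [DecidableRel G.Adj] (hG : IsRamanujan n d G)
    (A B : Finset V)
    (hA : (A.card : ℝ) = ε * n)
    (hB : 4 * (n : ℝ) / ((d : ℝ) * ε) < B.card) :
    ∃ a ∈ A, ∃ b ∈ B, G.Adj a b := by
  by_contra! hAB
  have hdε : 0 < (d : ℝ) * ε := by positivity
  have hBpos : (0 : ℝ) < #B := (div_nonneg (by positivity) hdε.le).trans_lt hB
  have hBn : (#B : ℝ) ≤ n := by
    rw [← hG.1]; exact_mod_cast card_le_univ B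
  have hAlonChung := SimpleGraph.card_mul_card_mul_sq_le_of_forall_not_adj hG.2.1
    (hG.sum_sq_mulVec_le hd) (card_pos.1 (by exact_mod_cast hBpos)) hAB
  rw [hA, hG.1] at hAlonChung
  rw [div_lt_iff₀ hdε] at hB
  have hnpos : (0 : ℝ) < n := hBpos.trans_le hBn
  have hd1 : (1 : ℝ) ≤ d := by exact_mod_cast hd
  have hsmall : ε * #B * d < 4 * n := by
    have : ε * #B * d * (d * n) < 4 * n * (d * n) := by nlinarith [mul_pos hnpos hBpos]
    exact lt_of_mul_lt_mul_right this (by positivity)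
  linarith

/-- in an `(n,d)`-Ramanujan graph, if `A` and `B` are disjoint vertex sets
with `|A| = ε·n` and `|B| > 4n/(d·ε)` for some `0 < ε < 1`, then some edge of `G`
connects a vertex of `A` to a vertex of `B`. -/
theorem ramanujan_unbalanced_expansion {V : Type*} [Fintype V] [DecidableEq V]
    (n d : ℕ) (hn : 0 < n) (hd : 0 < d) (ε : ℝ) (hε0 : 0 < ε) (hε1 : ε < 1)
    (G : SimpleGraph V) [DecidableRel G.Adj] (hG : IsRamanujan n d G)
    (A B : Finset V) (hdisj : Disjoint A B)
    (hA : (A.card : ℝ) = ε * n)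
    (hB : 4 * (n : ℝ) / ((d : ℝ) * ε) < B.card) :
    ∃ a ∈ A, ∃ b ∈ B, G.Adj a b :=
  ramanujan_unbalanced_expansion_general n d hd ε hε0 G hG A B hA hB
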